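/- Let 0 < α < 1, let u : ℝ → ℝ be a C² 2π-periodic function, and let ρ : ℝ → ℝ be measurable with 0 < c₀ ≤ ρ(y) ≤ C₀ for all y. Suppose x₊ is a point at which |u'| attains its global maximum: |u'(x₊)| = max_y |u'(y)|. Then u'(x₊) · ∫_ℝ ρ(x₊+z)(u'(x₊+z) − u'(x₊)) |z|^{−(1+α)} dz ≤ −(c₀/2) · D_α u'(x₊), where D_α u'(x) = ∫_ℝ |u'(x) − u'(x+z)|² |z|^{−(1+α)} dz. -/

import Mathlib

/-!
Put `a = u'(x₊)` and `b = u'(x₊ + z)`. Since `|b| ≤ |a|`, the identity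
`a (b - a) = (b² - a²)/2 - (a - b)²/2` gives `a (b - a) ≤ -(a - b)²/2`, and multiplying by
`ρ(x₊ + z) ≥ c₀` yields the inequality between the integrands. To integrate it, only the
left-hand integrand has to be integrable: `u'` is Lipschitz (periodicity bounds `u''`) and bounded,
so that integrand is `O(min(|z|, 1) |z|^{-(1+α)})`, which is integrable for `0 < α < 1`.
-/

open Real MeasureTheory

/-- Commutator (alignment) forcing `T(ρ,u)(x) = ∫ ρ(x+z)(u(x+z)-u(x))|z|^{-(1+α)} dz`. -/
noncomputable def commT (α : ℝ) (ρ u : ℝ → ℝ) (x : ℝ) : ℝ :=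
  ∫ z : ℝ, ρ (x + z) * (u (x + z) - u x) / |z| ^ (1 + α)

/-- Fractional Laplacian `Λ^α f(x) = ∫ (f(x) - f(x+z))|z|^{-(1+α)} dz`. -/
noncomputable def fracLap (α : ℝ) (f : ℝ → ℝ) (x : ℝ) : ℝ :=
  ∫ z : ℝ, (f x - f (x + z)) / |z| ^ (1 + α)

/-- Dissipation functional `D_α g(x) = ∫ |g(x) - g(x+z)|² |z|^{-(1+α)} dz`. -/
noncomputable def dissip (α : ℝ) (g : ℝ → ℝ) (x : ℝ) : ℝ :=
  ∫ z : ℝ, (g x - g (x + z)) ^ 2 / |z| ^ (1 + α)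

/-- The fractional Euler alignment system holds at the point `(x,t)`:
`ρ_t + (ρu)_x = 0` and `u_t + u u_x = T(ρ,u)`. -/
def IsEulerAlignSol (α : ℝ) (ρ u : ℝ → ℝ → ℝ) (x t : ℝ) : Prop :=
  deriv (fun s => ρ x s) t + deriv (fun y => ρ y t * u y t) x = 0 ∧
  deriv (fun s => u x s) t + u x t * deriv (fun y => u y t) x
    = commT α (fun y => ρ y t) (fun y => u y t) x

open Metric

lemma integrable_min_abs_one_div_abs_rpow {α : ℝ} (hα₀ : 0 < α) (hα₁ : α < 1) :
    Integrable fun z : ℝ => min |z| 1 / |z| ^ (1 + α) := by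
  have hmeas : AEStronglyMeasurable (fun z : ℝ => min |z| 1 / |z| ^ (1 + α)) :=
    (by fun_prop : Measurable fun z : ℝ => min |z| 1 / |z| ^ (1 + α)).aestronglyMeasurable
  rw [← integrableOn_univ, ← Set.union_compl_self (ball (0 : ℝ) 1), integrableOn_union]
  constructor
  · refine integrableOn_ball_of_norm_le_rpow (by simp) (C := 1) (α := α) (by simpa using hα₁)
      (ae_of_all _ fun z => ?_) hmeas
    rcases eq_or_ne z 0 with rfl | hz
    · simp [zero_rpow (by linarith : 1 + α ≠ 0), rpow_nonneg]
    have hz' : 0 < |z| := abs_pos.2 hz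
    rw [norm_div, Real.norm_eq_abs, Real.norm_eq_abs, Real.norm_eq_abs,
      abs_of_nonneg (le_min hz'.le zero_le_one), abs_of_nonneg (rpow_nonneg hz'.le _),
      rpow_add hz', rpow_one, rpow_neg hz'.le, one_mul]
    calc min |z| 1 / (|z| * |z| ^ α) ≤ |z| / (|z| * |z| ^ α) := by gcongr; exact min_le_left _ _
      _ = (|z| ^ α)⁻¹ := by field_simp
  · refine ((integrable_one_add_norm (μ := volume) (r := 1 + α) (by simpa using hα₀)).const_mul
      (2 ^ (1 + α))).integrableOn.mono' hmeas.restrict ?_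
    filter_upwards [ae_restrict_mem measurableSet_ball.compl] with z hz
    have hz1 : 1 ≤ |z| := by simpa using hz
    have hz' : 0 < |z| := by linarith
    rw [Real.norm_eq_abs, min_eq_right hz1, abs_of_nonneg (by positivity), Real.norm_eq_abs,
      rpow_neg (by positivity), ← div_eq_mul_inv, div_le_div_iff₀ (by positivity) (by positivity),
      one_mul, ← mul_rpow zero_le_two hz'.le]
    exact rpow_le_rpow (by positivity) (by linarith) (by linarith)

lemma integrable_div_abs_rpow_of_abs_le {α : ℝ} (hα₀ : 0 < α) (hα₁ : α < 1) {f : ℝ → ℝ}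
    (hf : AEStronglyMeasurable f) {C : ℝ} (hfC : ∀ z, |f z| ≤ C * min |z| 1) :
    Integrable fun z => f z / |z| ^ (1 + α) := by
  refine ((integrable_min_abs_one_div_abs_rpow hα₀ hα₁).const_mul C).mono'
    (hf.div₀ (by fun_prop : Measurable fun z : ℝ => |z| ^ (1 + α)).aestronglyMeasurable)
    (ae_of_all _ fun z => ?_)
  rw [Real.norm_eq_abs, abs_div, abs_of_nonneg (rpow_nonneg (abs_nonneg z) _), ← mul_div_assoc]
  exact div_le_div_of_nonneg_right (hfC z) (rpow_nonneg (abs_nonneg z) _)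

lemma LipschitzWith.abs_sub_le_mul_min {g : ℝ → ℝ} {L : NNReal} (hg : LipschitzWith L g)
    {M : ℝ} (hM : ∀ y, |g y| ≤ M) (x z : ℝ) :
    |g (x + z) - g x| ≤ max (L : ℝ) (2 * M) * min |z| 1 := by
  have hlip : |g (x + z) - g x| ≤ L * |z| := by
    simpa [Real.dist_eq] using hg.dist_le_mul (x + z) x
  have hbdd : |g (x + z) - g x| ≤ 2 * M := by
    linarith [abs_sub (g (x + z)) (g x), hM (x + z), hM x]
  rcases le_total |z| 1 with hz | hz
  · rw [min_eq_left hz]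
    exact hlip.trans (mul_le_mul_of_nonneg_right (le_max_left _ _) (abs_nonneg z))
  · rw [min_eq_right hz, mul_one]
    exact hbdd.trans (le_max_right _ _)

lemma Function.Periodic.deriv {f : ℝ → ℝ} {c : ℝ} (hf : Function.Periodic f c) :
    Function.Periodic (deriv f) c := fun x => by
  rw [← deriv_comp_add_const, funext hf]

lemma Function.Periodic.exists_lipschitzWith {f : ℝ → ℝ} {c : ℝ} (hf : Function.Periodic f c)
    (hc : c ≠ 0) (hf₁ : ContDiff ℝ 1 f) : ∃ L, LipschitzWith L f := by
  obtain ⟨C, hC⟩ := (isBounded_iff_forall_norm_le.1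
    (hf.deriv.isBounded_of_continuous hc (hf₁.continuous_deriv le_rfl)))
  refine ⟨C.toNNReal, lipschitzWith_of_nnnorm_deriv_le (hf₁.differentiable one_ne_zero)
    fun x => ?_⟩
  rw [← NNReal.coe_le_coe, coe_nnnorm, Real.coe_toNNReal']
  exact (hC _ ⟨x, rfl⟩).trans (le_max_left _ _)

lemma mul_mul_sub_le_neg_half_mul_sq {a b ρ c : ℝ} (hba : |b| ≤ |a|) (hc : 0 ≤ c)
    (hcρ : c ≤ ρ) : a * (ρ * (b - a)) ≤ -(c / 2) * (a - b) ^ 2 := by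
  have hsq : b ^ 2 ≤ a ^ 2 := sq_le_sq.2 hba
  have key : a * (b - a) ≤ -(a - b) ^ 2 / 2 := by nlinarith
  nlinarith [mul_le_mul_of_nonneg_left key (hc.trans hcρ), sq_nonneg (a - b)]

-- No integrability of `g` is needed: if it fails, `∫ g = 0` and the claim is `∫ f ≤ 0`.
lemma integral_mono_of_nonpos {X : Type*} [MeasurableSpace X] {μ : Measure X} {f g : X → ℝ}
    (hf : Integrable f μ) (hg : g ≤ 0) (hfg : f ≤ g) : ∫ x, f x ∂μ ≤ ∫ x, g x ∂μ := by
  have := integral_mono_of_nonneg (μ := μ) (f := fun x => -g x) (g := fun x => -f x)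
    (ae_of_all _ fun x => neg_nonneg.2 (hg x)) hf.neg (ae_of_all _ fun x => neg_le_neg (hfg x))
  simpa only [integral_neg, neg_le_neg_iff] using this

/-- at a point `x₊` of global maximum of `|u'|`, the elliptic term
`u'(x₊) · ∫ ρ(x₊+z)(u'(x₊+z) - u'(x₊))|z|^{-(1+α)} dz` is dominated by
`-(c₀/2) D_α u'(x₊)`. -/
theorem dissipation_at_max
    (α : ℝ) (hα₀ : 0 < α) (hα₁ : α < 1)
    (u ρ : ℝ → ℝ) (c₀ C₀ : ℝ) (hc₀ : 0 < c₀)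
    (hu : ContDiff ℝ 2 u) (huper : Function.Periodic u (2 * π))
    (hρmeas : Measurable ρ)
    (hρbdd : ∀ y, c₀ ≤ ρ y ∧ ρ y ≤ C₀)
    (xp : ℝ) (hmax : ∀ y, |deriv u y| ≤ |deriv u xp|) :
    deriv u xp *
        ∫ z : ℝ, ρ (xp + z) * (deriv u (xp + z) - deriv u xp) / |z| ^ (1 + α)
      ≤ -(c₀ / 2) * dissip α (deriv u) xp := by
  obtain ⟨L, hL⟩ := huper.deriv.exists_lipschitzWith (by positivity) (hu.deriv' (n := 1))
  have hρ_abs : ∀ y, |ρ y| ≤ C₀ := fun y =>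
    abs_le.2 ⟨by linarith [hρbdd y], (hρbdd y).2⟩
  have hint : Integrable fun z =>
      ρ (xp + z) * (deriv u (xp + z) - deriv u xp) / |z| ^ (1 + α) := by
    refine integrable_div_abs_rpow_of_abs_le hα₀ hα₁ ?_ (C := C₀ * max (L : ℝ) (2 * |deriv u xp|))
      fun z => ?_
    · have hu' : Continuous (deriv u) := hu.continuous_deriv one_le_two
      fun_prop
    · rw [abs_mul, mul_assoc]
      exact mul_le_mul (hρ_abs _) (hL.abs_sub_le_mul_min hmax xp z) (abs_nonneg _)
        ((abs_nonneg _).trans (hρ_abs 0))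
  rw [dissip, ← integral_const_mul, ← integral_const_mul]
  refine integral_mono_of_nonpos (hint.const_mul _) (fun z => ?_) (fun z => ?_)
  · exact mul_nonpos_of_nonpos_of_nonneg (by linarith) (by positivity)
  · simp only [← mul_div_assoc]
    exact div_le_div_of_nonneg_right
      (mul_mul_sub_le_neg_half_mul_sq (hmax _) hc₀.le (hρbdd _).1) (by positivity)
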